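/- arXiv:2009.11544 — 2 statements merged into one kernel-verified Lean document; each statement's English description precedes it below -/
import Mathlib

section
/- Let H be a complex Hilbert space, n ∈ ℕ, and λ : Fin n → ℂ with Re λ_i < 0 for every i. Let g : (Fin n → ℕ) → H be a family of vectors, indexed by multi-indices α ∈ ℕ₀^n, that is pairwise orthogonal and satisfies ∑_α ‖g_α‖² < ∞. For a multi-index α set Λ(α) := ∑_{i} α_i λ_i. Then: (i) for every t ≥ 0 the series u(t) := ∑_α e^{Λ(α) t} g_α converges in H; (ii) for every s ∈ ℂ with Re s > 0 the function t ↦ e^{-s t} u(t) is Bochner integrable on [0,∞), the series ∑_α (s − Λ(α))^{-1} g_α converges in H, and ∫_0^∞ e^{-s t} u(t) dt = ∑_α (s − Λ(α))^{-1} g_α. (This is the spectral expansion of the Koopman resolvent for dynamics converging to a stable hyperbolic equilibrium, where λ_1,…,λ_n are the principal Koopman eigenvalues with negative real parts and g_α = P_α f are the orthogonal spectral projections of the observable in the modulated Segal–Bargmann space.) -/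
/-!
Bounded coefficients `c α` keep `c α • g α` pairwise orthogonal with square-summable norms, so by
Pythagoras the series `∑ c α • g α` converges and its partial sums have norm at most
`sup ‖c‖ * √(∑ ‖g α‖²)`. Since `Re Λ(α) ≤ 0`, this applies to `c α = e^{Λ(α) t}` for `t ≥ 0`.
Each term integrates to `∫₀^∞ e^{-st} e^{Λ(α) t} dt = (s - Λ(α))⁻¹`, and the uniform bound
`√(∑ ‖g α‖²) e^{-(Re s) t}` on the partial sums lets dominated convergence, along the filter of
finite sets of indices, pass the integral through the series; this also yields convergence of
`∑ (s - Λ(α))⁻¹ • g α`.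
-/

open MeasureTheory Filter
open scoped InnerProductSpace

section OrthogonalSeries

variable {ι H : Type*} [NormedAddCommGroup H] [InnerProductSpace ℂ H] {g : ι → H}

lemma orthogonalFamily_span_singleton (horth : Pairwise fun α β => ⟪g α, g β⟫_ℂ = 0) :
    OrthogonalFamily ℂ (fun α => ℂ ∙ g α) fun α => (ℂ ∙ g α).subtypeₗᵢ := by
  rintro α β hαβ ⟨x, hx⟩ ⟨y, hy⟩
  obtain ⟨a, rfl⟩ := Submodule.mem_span_singleton.mp hx
  obtain ⟨b, rfl⟩ := Submodule.mem_span_singleton.mp hy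
  simp [inner_smul_left, inner_smul_right, horth hαβ]

lemma norm_sum_smul_sq_of_orthogonal (horth : Pairwise fun α β => ⟪g α, g β⟫_ℂ = 0)
    (c : ι → ℂ) (F : Finset ι) :
    ‖∑ α ∈ F, c α • g α‖ ^ 2 = ∑ α ∈ F, ‖c α‖ ^ 2 * ‖g α‖ ^ 2 := by
  simpa [norm_smul, mul_pow] using
    (orthogonalFamily_span_singleton horth).norm_sum
      (fun α => ⟨c α • g α, Submodule.smul_mem _ _ (Submodule.mem_span_singleton_self _)⟩) F

lemma summable_smul_of_orthogonal [CompleteSpace H]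
    (horth : Pairwise fun α β => ⟪g α, g β⟫_ℂ = 0) (hsum : Summable fun α => ‖g α‖ ^ 2)
    {c : ι → ℂ} {C : ℝ} (hc : ∀ α, ‖c α‖ ≤ C) :
    Summable fun α => c α • g α := by
  have hsq : Summable fun α => ‖c α‖ ^ 2 * ‖g α‖ ^ 2 :=
    (hsum.mul_left (C ^ 2)).of_nonneg_of_le (fun α => by positivity) fun α =>
      mul_le_mul_of_nonneg_right (pow_le_pow_left₀ (norm_nonneg _) (hc α) 2) (by positivity)
  have := (orthogonalFamily_span_singleton horth).summable_iff_norm_sq_summable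
    (fun α => ⟨c α • g α, Submodule.smul_mem _ _ (Submodule.mem_span_singleton_self _)⟩)
  simpa [norm_smul, mul_pow, hsq] using this

lemma norm_sum_smul_le_of_orthogonal (horth : Pairwise fun α β => ⟪g α, g β⟫_ℂ = 0)
    (hsum : Summable fun α => ‖g α‖ ^ 2) {c : ι → ℂ} (hc : ∀ α, ‖c α‖ ≤ 1) (F : Finset ι) :
    ‖∑ α ∈ F, c α • g α‖ ≤ √(∑' α, ‖g α‖ ^ 2) := by
  refine Real.le_sqrt_of_sq_le ?_
  calc ‖∑ α ∈ F, c α • g α‖ ^ 2 = ∑ α ∈ F, ‖c α‖ ^ 2 * ‖g α‖ ^ 2 :=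
        norm_sum_smul_sq_of_orthogonal horth c F
    _ ≤ ∑ α ∈ F, ‖g α‖ ^ 2 := Finset.sum_le_sum fun α _ =>
        mul_le_of_le_one_left (by positivity) (pow_le_one₀ (norm_nonneg _) (hc α))
    _ ≤ ∑' α, ‖g α‖ ^ 2 := hsum.sum_le_tsum F fun α _ => by positivity

lemma norm_tsum_smul_le_of_orthogonal [CompleteSpace H]
    (horth : Pairwise fun α β => ⟪g α, g β⟫_ℂ = 0) (hsum : Summable fun α => ‖g α‖ ^ 2)
    {c : ι → ℂ} (hc : ∀ α, ‖c α‖ ≤ 1) :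
    ‖∑' α, c α • g α‖ ≤ √(∑' α, ‖g α‖ ^ 2) :=
  le_of_tendsto (summable_smul_of_orthogonal horth hsum hc).hasSum.norm
    (Eventually.of_forall (norm_sum_smul_le_of_orthogonal horth hsum hc))

end OrthogonalSeries

lemma norm_cexp_mul_le_one {z : ℂ} (hz : z.re ≤ 0) {t : ℝ} (ht : 0 ≤ t) :
    ‖Complex.exp (z * t)‖ ≤ 1 := by
  rw [Complex.norm_exp, Real.exp_le_one_iff, Complex.re_mul_ofReal]
  exact mul_nonpos_of_nonpos_of_nonneg hz ht

section LaplaceTransform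

variable {E : Type*} [NormedAddCommGroup E] [NormedSpace ℂ E] {s z : ℂ}

lemma cexp_neg_mul_smul_cexp_mul_smul (t : ℝ) (v : E) :
    Complex.exp (-s * t) • Complex.exp (z * t) • v = Complex.exp ((z - s) * t) • v := by
  rw [smul_smul, ← Complex.exp_add, ← add_mul, neg_add_eq_sub]

lemma integrableOn_cexp_neg_mul_smul_cexp_mul_smul (hs : 0 < s.re) (hz : z.re ≤ 0) (v : E) :
    IntegrableOn (fun t : ℝ => Complex.exp (-s * t) • Complex.exp (z * t) • v) (Set.Ioi 0) := by
  simp_rw [cexp_neg_mul_smul_cexp_mul_smul]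
  exact (integrableOn_exp_mul_complex_Ioi (by rw [Complex.sub_re]; linarith) 0).smul_const v

lemma integral_cexp_neg_mul_smul_cexp_mul_smul [CompleteSpace E] (hs : 0 < s.re)
    (hz : z.re ≤ 0) (v : E) :
    ∫ t in Set.Ioi (0 : ℝ), Complex.exp (-s * t) • Complex.exp (z * t) • v = (s - z)⁻¹ • v := by
  simp_rw [cexp_neg_mul_smul_cexp_mul_smul]
  rw [integral_smul_const, integral_exp_mul_complex_Ioi (by rw [Complex.sub_re]; linarith),
    neg_div, ← div_neg, neg_sub, Complex.ofReal_zero, mul_zero, Complex.exp_zero, one_div]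

lemma norm_cexp_neg_mul_smul_le {t : ℝ} {v : E} {M : ℝ} (hv : ‖v‖ ≤ M) :
    ‖Complex.exp (-s * t) • v‖ ≤ M * Real.exp (-s.re * t) := by
  rw [norm_smul, Complex.norm_exp, Complex.re_mul_ofReal, Complex.neg_re, mul_comm]
  exact mul_le_mul_of_nonneg_right hv (Real.exp_nonneg _)

end LaplaceTransform

section ResolventExpansion

variable {ι H : Type*} [NormedAddCommGroup H] [InnerProductSpace ℂ H] [CompleteSpace H]
  {g : ι → H} {Λ : ι → ℂ}

lemma summable_cexp_mul_smul (horth : Pairwise fun α β => ⟪g α, g β⟫_ℂ = 0)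
    (hsum : Summable fun α => ‖g α‖ ^ 2) (hΛ : ∀ α, (Λ α).re ≤ 0) {t : ℝ} (ht : 0 ≤ t) :
    Summable fun α => Complex.exp (Λ α * t) • g α :=
  summable_smul_of_orthogonal horth hsum fun α => norm_cexp_mul_le_one (hΛ α) ht

variable [Countable ι]

lemma aestronglyMeasurable_tsum_cexp_mul_smul (horth : Pairwise fun α β => ⟪g α, g β⟫_ℂ = 0)
    (hsum : Summable fun α => ‖g α‖ ^ 2) (hΛ : ∀ α, (Λ α).re ≤ 0) :
    AEStronglyMeasurable (fun t : ℝ => ∑' α, Complex.exp (Λ α * t) • g α)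
      (volume.restrict (Set.Ioi 0)) := by
  refine aestronglyMeasurable_of_tendsto_ae (atTop : Filter (Finset ι))
    (f := fun F (t : ℝ) => ∑ α ∈ F, Complex.exp (Λ α * t) • g α)
    (fun F => (by fun_prop : Continuous _).aestronglyMeasurable) ?_
  filter_upwards [ae_restrict_mem measurableSet_Ioi] with t ht
  exact (summable_cexp_mul_smul horth hsum hΛ ht.le).hasSum

lemma integrableOn_cexp_neg_mul_smul_tsum (horth : Pairwise fun α β => ⟪g α, g β⟫_ℂ = 0)
    (hsum : Summable fun α => ‖g α‖ ^ 2) (hΛ : ∀ α, (Λ α).re ≤ 0) {s : ℂ} (hs : 0 < s.re) :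
    IntegrableOn
      (fun t : ℝ => Complex.exp (-s * t) • ∑' α, Complex.exp (Λ α * t) • g α) (Set.Ioi 0) := by
  refine Integrable.mono' ((exp_neg_integrableOn_Ioi 0 hs).const_mul √(∑' α, ‖g α‖ ^ 2))
    ((by fun_prop : Continuous fun t : ℝ => Complex.exp (-s * t)).aestronglyMeasurable.smul
      (aestronglyMeasurable_tsum_cexp_mul_smul horth hsum hΛ)) ?_
  filter_upwards [ae_restrict_mem measurableSet_Ioi] with t ht
  exact norm_cexp_neg_mul_smul_le <|
    norm_tsum_smul_le_of_orthogonal horth hsum fun α => norm_cexp_mul_le_one (hΛ α) ht.le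

lemma hasSum_integral_cexp_neg_mul_smul_tsum (horth : Pairwise fun α β => ⟪g α, g β⟫_ℂ = 0)
    (hsum : Summable fun α => ‖g α‖ ^ 2) (hΛ : ∀ α, (Λ α).re ≤ 0) {s : ℂ} (hs : 0 < s.re) :
    HasSum (fun α => (s - Λ α)⁻¹ • g α)
      (∫ t in Set.Ioi (0 : ℝ), Complex.exp (-s * t) • ∑' α, Complex.exp (Λ α * t) • g α) := by
  have partial_sums (F : Finset ι) :
      ∫ t in Set.Ioi (0 : ℝ), Complex.exp (-s * t) • ∑ α ∈ F, Complex.exp (Λ α * t) • g α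
        = ∑ α ∈ F, (s - Λ α)⁻¹ • g α := by
    simp_rw [Finset.smul_sum]
    rw [integral_finsetSum F fun α _ =>
      integrableOn_cexp_neg_mul_smul_cexp_mul_smul hs (hΛ α) (g α)]
    exact Finset.sum_congr rfl fun α _ => integral_cexp_neg_mul_smul_cexp_mul_smul hs (hΛ α) _
  refine (tendsto_integral_filter_of_dominated_convergence _ ?_ ?_
    ((exp_neg_integrableOn_Ioi 0 hs).const_mul √(∑' α, ‖g α‖ ^ 2)) ?_).congr partial_sums
  · exact Eventually.of_forall fun F => (by fun_prop : Continuous _).aestronglyMeasurable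
  · refine Eventually.of_forall fun F => ?_
    filter_upwards [ae_restrict_mem measurableSet_Ioi] with t ht
    exact norm_cexp_neg_mul_smul_le <|
      norm_sum_smul_le_of_orthogonal horth hsum (fun α => norm_cexp_mul_le_one (hΛ α) ht.le) F
  · filter_upwards [ae_restrict_mem measurableSet_Ioi] with t ht
    simp_rw [Finset.smul_sum]
    exact (summable_cexp_mul_smul horth hsum hΛ ht.le).hasSum.const_smul _

end ResolventExpansion

lemma re_sum_natCast_mul_nonpos {κ : Type*} [Fintype κ] {lam : κ → ℂ}
    (hlam : ∀ i, (lam i).re ≤ 0) (α : κ → ℕ) : (∑ i, (α i : ℂ) * lam i).re ≤ 0 := by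
  rw [Complex.re_sum]
  exact Finset.sum_nonpos fun i _ => by
    rw [← Complex.ofReal_natCast, Complex.re_ofReal_mul]
    exact mul_nonpos_of_nonneg_of_nonpos (Nat.cast_nonneg _) (hlam i)

/-- Spectral expansion of the Koopman resolvent for dynamics converging to a
stable hyperbolic equilibrium: `lam 0, …, lam (n-1)` are the principal Koopman
eigenvalues (with negative real parts) and `g α = P α f` are the orthogonal
spectral projections of the observable in the modulated Segal–Bargmann space,
indexed by multi-indices `α : Fin n → ℕ`. -/
theorem koopman_resolvent_stable_equilibrium
    {H : Type*} [NormedAddCommGroup H] [InnerProductSpace ℂ H] [CompleteSpace H]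
    (n : ℕ) (lam : Fin n → ℂ) (hlam : ∀ i, (lam i).re < 0)
    (g : (Fin n → ℕ) → H)
    (horth : Pairwise fun α β => ⟪g α, g β⟫_ℂ = 0)
    (hsum : Summable fun α => ‖g α‖ ^ 2) :
    (∀ t : ℝ, 0 ≤ t →
      Summable fun α : Fin n → ℕ =>
        Complex.exp ((∑ i, (α i : ℂ) * lam i) * t) • g α) ∧
    ∀ s : ℂ, 0 < s.re →
      IntegrableOn
        (fun t : ℝ =>
          Complex.exp (-s * t) •
            ∑' α : Fin n → ℕ, Complex.exp ((∑ i, (α i : ℂ) * lam i) * t) • g α)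
        (Set.Ioi 0) ∧
      (Summable fun α : Fin n → ℕ => (s - ∑ i, (α i : ℂ) * lam i)⁻¹ • g α) ∧
      ∫ t in Set.Ioi (0 : ℝ),
          Complex.exp (-s * t) •
            ∑' α : Fin n → ℕ, Complex.exp ((∑ i, (α i : ℂ) * lam i) * t) • g α
        = ∑' α : Fin n → ℕ, (s - ∑ i, (α i : ℂ) * lam i)⁻¹ • g α := by
  set Λ : (Fin n → ℕ) → ℂ := fun α => ∑ i, (α i : ℂ) * lam i
  have hΛ : ∀ α, (Λ α).re ≤ 0 := re_sum_natCast_mul_nonpos fun i => (hlam i).le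
  refine ⟨fun t ht => summable_cexp_mul_smul horth hsum hΛ ht, fun s hs => ?_⟩
  have hasSum := hasSum_integral_cexp_neg_mul_smul_tsum horth hsum hΛ hs
  exact ⟨integrableOn_cexp_neg_mul_smul_tsum horth hsum hΛ hs, hasSum.summable,
    hasSum.tsum_eq.symm⟩
end

section
/- Let H be a complex Hilbert space, ι a countable index type, g : ι → H a pairwise orthogonal family with ∑_{j∈ι} ‖g_j‖² < ∞, and λ : ι → ℂ with Re λ_j ≤ 0 for every j ∈ ι. Then: (i) for every t ≥ 0 the series u(t) := ∑_{j∈ι} e^{λ_j t} g_j converges in H; (ii) for every s ∈ ℂ with Re s > 0 the function t ↦ e^{-s t} u(t) is Bochner integrable on [0,∞), the series ∑_{j∈ι} (s − λ_j)^{-1} g_j converges in H, and ∫_0^∞ e^{-s t} u(t) dt = ∑_{j∈ι} (s − λ_j)^{-1} g_j. (This is the common core of the spectral expansion formulae of the Koopman resolvent: a diagonal semigroup with eigenvalues in the closed left half-plane acting on orthogonal spectral components, whose Laplace transform has the resolvent partial-fraction form with region of convergence Re s > 0.) -/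
/-! The semigroup `t ↦ ∑ⱼ e^{λⱼ t} gⱼ` is a series of pairwise orthogonal vectors whose
coefficients have modulus at most `1` for `t ≥ 0`, so by Pythagoras all its partial sums are
bounded by `(∑ⱼ ‖gⱼ‖²)^{1/2}`. After multiplication by `e^{-st}` they are therefore dominated
by an integrable exponential, and dominated convergence along the net of finite partial sums
lets us integrate term by term; the Laplace transform of `e^{λⱼ t}` is `(s - λⱼ)⁻¹`. -/

open MeasureTheory Set Filter Topology
open scoped InnerProductSpace

section PairwiseOrthogonal

variable {𝕜 E ι : Type*} [RCLike 𝕜] [NormedAddCommGroup E] [InnerProductSpace 𝕜 E]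
  {v : ι → E}

theorem orthogonalFamily_span_singleton_s5 (hv : Pairwise fun i j => ⟪v i, v j⟫_𝕜 = 0) :
    OrthogonalFamily 𝕜 (fun i => ↥(𝕜 ∙ v i)) fun i => (𝕜 ∙ v i).subtypeₗᵢ := by
  intro i j hij x y
  obtain ⟨a, ha⟩ := Submodule.mem_span_singleton.mp x.2
  obtain ⟨b, hb⟩ := Submodule.mem_span_singleton.mp y.2
  simp [← ha, ← hb, inner_smul_left, inner_smul_right, hv hij]

theorem norm_sum_sq_of_pairwise_inner_eq_zero (hv : Pairwise fun i j => ⟪v i, v j⟫_𝕜 = 0)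
    (s : Finset ι) : ‖∑ i ∈ s, v i‖ ^ 2 = ∑ i ∈ s, ‖v i‖ ^ 2 :=
  (orthogonalFamily_span_singleton_s5 hv).norm_sum
    (fun i => ⟨v i, Submodule.mem_span_singleton_self _⟩) s

theorem summable_of_pairwise_inner_eq_zero [CompleteSpace E]
    (hv : Pairwise fun i j => ⟪v i, v j⟫_𝕜 = 0) (h : Summable fun i => ‖v i‖ ^ 2) :
    Summable v :=
  ((orthogonalFamily_span_singleton_s5 hv).summable_iff_norm_sq_summable
    (fun i => ⟨v i, Submodule.mem_span_singleton_self _⟩)).mpr h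

theorem pairwise_inner_smul_eq_zero (hv : Pairwise fun i j => ⟪v i, v j⟫_𝕜 = 0) (c : ι → 𝕜) :
    Pairwise fun i j => ⟪c i • v i, c j • v j⟫_𝕜 = 0 := fun i j hij => by
  simp only [inner_smul_left, inner_smul_right, hv hij, mul_zero]

variable {c : ι → 𝕜} {M : ℝ}

theorem norm_smul_sq_le_of_norm_le (hc : ∀ i, ‖c i‖ ≤ M) (i : ι) :
    ‖c i • v i‖ ^ 2 ≤ M ^ 2 * ‖v i‖ ^ 2 := by
  rw [norm_smul, mul_pow]
  gcongr
  exact hc i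

theorem summable_smul_of_pairwise_inner_eq_zero [CompleteSpace E]
    (hv : Pairwise fun i j => ⟪v i, v j⟫_𝕜 = 0) (hsum : Summable fun i => ‖v i‖ ^ 2)
    (hc : ∀ i, ‖c i‖ ≤ M) : Summable fun i => c i • v i :=
  summable_of_pairwise_inner_eq_zero (pairwise_inner_smul_eq_zero hv c) <|
    (hsum.mul_left (M ^ 2)).of_nonneg_of_le (fun _ => by positivity)
      (norm_smul_sq_le_of_norm_le hc)

theorem norm_sum_smul_le_of_pairwise_inner_eq_zero
    (hv : Pairwise fun i j => ⟪v i, v j⟫_𝕜 = 0) (hsum : Summable fun i => ‖v i‖ ^ 2)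
    (hM : 0 ≤ M) (hc : ∀ i, ‖c i‖ ≤ M) (s : Finset ι) :
    ‖∑ i ∈ s, c i • v i‖ ≤ M * √(∑' i, ‖v i‖ ^ 2) := by
  have hsq : ‖∑ i ∈ s, c i • v i‖ ^ 2 ≤ (M * √(∑' i, ‖v i‖ ^ 2)) ^ 2 :=
    calc ‖∑ i ∈ s, c i • v i‖ ^ 2 = ∑ i ∈ s, ‖c i • v i‖ ^ 2 :=
          norm_sum_sq_of_pairwise_inner_eq_zero (pairwise_inner_smul_eq_zero hv c) s
      _ ≤ ∑ i ∈ s, M ^ 2 * ‖v i‖ ^ 2 :=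
          Finset.sum_le_sum fun i _ => norm_smul_sq_le_of_norm_le hc i
      _ ≤ M ^ 2 * ∑' i, ‖v i‖ ^ 2 := by
          rw [← Finset.mul_sum]
          gcongr
          exact hsum.sum_le_tsum s fun i _ => by positivity
      _ = (M * √(∑' i, ‖v i‖ ^ 2)) ^ 2 := by
          rw [mul_pow, Real.sq_sqrt (tsum_nonneg fun i => by positivity)]
  exact pow_le_pow_iff_left₀ (norm_nonneg _) (by positivity) two_ne_zero |>.mp hsq

end PairwiseOrthogonal

section DominatedPartialSums

variable {α ι G : Type*} [MeasurableSpace α] {μ : Measure α} [Countable ι]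
  [NormedAddCommGroup G] {f : ι → α → G} {F : α → G} {bound : α → ℝ}

theorem integrable_of_dominated_partial_sums (hf : ∀ i, AEStronglyMeasurable (f i) μ)
    (hbound : Integrable bound μ) (hle : ∀ s : Finset ι, ∀ᵐ a ∂μ, ‖∑ i ∈ s, f i a‖ ≤ bound a)
    (hF : ∀ᵐ a ∂μ, HasSum (fun i => f i a) (F a)) : Integrable F μ := by
  have hmeas : AEStronglyMeasurable F μ :=
    aestronglyMeasurable_of_tendsto_ae atTop
      (fun s => Finset.aestronglyMeasurable_fun_sum s fun i _ => hf i) hF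
  refine hbound.mono' hmeas ?_
  filter_upwards [hF, ae_all_iff.mpr hle] with a ha hle_a
  exact le_of_tendsto' ha.norm hle_a

theorem hasSum_integral_of_dominated_partial_sums [NormedSpace ℝ G]
    (hf : ∀ i, Integrable (f i) μ)
    (hbound : Integrable bound μ) (hle : ∀ s : Finset ι, ∀ᵐ a ∂μ, ‖∑ i ∈ s, f i a‖ ≤ bound a)
    (hF : ∀ᵐ a ∂μ, HasSum (fun i => f i a) (F a)) :
    HasSum (fun i => ∫ a, f i a ∂μ) (∫ a, F a ∂μ) := by
  refine (tendsto_integral_filter_of_dominated_convergence bound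
    (Eventually.of_forall fun s => Finset.aestronglyMeasurable_fun_sum s fun i _ =>
      (hf i).aestronglyMeasurable)
    (Eventually.of_forall hle) hbound hF).congr fun s => ?_
  exact integral_finsetSum s fun i _ => hf i

end DominatedPartialSums

section Laplace

variable {E : Type*} [NormedAddCommGroup E] [NormedSpace ℂ E] {s z : ℂ}

theorem norm_cexp_mul_ofReal (z : ℂ) (t : ℝ) : ‖Complex.exp (z * t)‖ = Real.exp (z.re * t) := by
  rw [Complex.norm_exp, Complex.re_mul_ofReal]

theorem norm_cexp_mul_ofReal_le_one (hz : z.re ≤ 0) {t : ℝ} (ht : 0 ≤ t) :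
    ‖Complex.exp (z * t)‖ ≤ 1 := by
  rw [norm_cexp_mul_ofReal, Real.exp_le_one_iff]
  exact mul_nonpos_of_nonpos_of_nonneg hz ht

theorem cexp_smul_cexp_smul (s z : ℂ) (t : ℝ) (x : E) :
    Complex.exp (-s * t) • Complex.exp (z * t) • x = Complex.exp ((z - s) * t) • x := by
  rw [smul_smul, ← Complex.exp_add]
  ring_nf

theorem integrableOn_laplace_cexp_smul (h : z.re < s.re) (x : E) :
    IntegrableOn (fun t : ℝ => Complex.exp (-s * t) • Complex.exp (z * t) • x) (Ioi 0) := by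
  simp only [cexp_smul_cexp_smul]
  exact (integrableOn_exp_mul_complex_Ioi (by simpa using h) 0).smul_const x

theorem integral_laplace_cexp_smul [CompleteSpace E] (h : z.re < s.re) (x : E) :
    ∫ t in Ioi (0 : ℝ), Complex.exp (-s * t) • Complex.exp (z * t) • x = (s - z)⁻¹ • x := by
  simp only [cexp_smul_cexp_smul]
  rw [integral_smul_const, integral_exp_mul_complex_Ioi (by simpa using h), Complex.ofReal_zero,
    mul_zero, Complex.exp_zero, neg_div, ← div_neg, neg_sub, one_div]

end Laplace

/-- Common core of the spectral expansion formulae of the Koopman resolvent: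
a diagonal semigroup with eigenvalues in the closed left half-plane acting on
orthogonal spectral components; its Laplace transform has the resolvent
partial-fraction form with region of convergence `Re s > 0`. -/
theorem koopman_resolvent_diagonal_core
    {H : Type*} [NormedAddCommGroup H] [InnerProductSpace ℂ H] [CompleteSpace H]
    {ι : Type*} [Countable ι] (g : ι → H) (lam : ι → ℂ)
    (horth : Pairwise fun j k => ⟪g j, g k⟫_ℂ = 0)
    (hsum : Summable fun j => ‖g j‖ ^ 2)
    (hre : ∀ j, (lam j).re ≤ 0) :
    (∀ t : ℝ, 0 ≤ t → Summable fun j => Complex.exp (lam j * t) • g j) ∧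
    ∀ s : ℂ, 0 < s.re →
      IntegrableOn
        (fun t : ℝ => Complex.exp (-s * t) • ∑' j, Complex.exp (lam j * t) • g j)
        (Set.Ioi 0) ∧
      (Summable fun j => (s - lam j)⁻¹ • g j) ∧
      ∫ t in Set.Ioi (0 : ℝ),
          Complex.exp (-s * t) • ∑' j, Complex.exp (lam j * t) • g j
        = ∑' j, (s - lam j)⁻¹ • g j := by
  have hcoef (t : ℝ) (ht : 0 ≤ t) (j : ι) : ‖Complex.exp (lam j * t)‖ ≤ 1 :=
    norm_cexp_mul_ofReal_le_one (hre j) ht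
  have hu (t : ℝ) (ht : 0 ≤ t) : Summable fun j => Complex.exp (lam j * t) • g j :=
    summable_smul_of_pairwise_inner_eq_zero horth hsum (hcoef t ht)
  refine ⟨hu, fun s hs => ?_⟩
  have hlt (j : ι) : (lam j).re < s.re := (hre j).trans_lt hs
  have hle (F : Finset ι) : ∀ᵐ t : ℝ ∂volume.restrict (Ioi 0),
      ‖∑ j ∈ F, Complex.exp (-s * t) • Complex.exp (lam j * t) • g j‖ ≤
        √(∑' j, ‖g j‖ ^ 2) * Real.exp (-s.re * t) := by
    filter_upwards [ae_restrict_mem measurableSet_Ioi] with t ht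
    rw [← Finset.smul_sum, norm_smul, norm_cexp_mul_ofReal, Complex.neg_re, mul_comm]
    gcongr
    simpa using norm_sum_smul_le_of_pairwise_inner_eq_zero horth hsum zero_le_one
      (hcoef t ht.le) F
  have hlim : ∀ᵐ t : ℝ ∂volume.restrict (Ioi 0), HasSum
      (fun j => Complex.exp (-s * t) • Complex.exp (lam j * t) • g j)
      (Complex.exp (-s * t) • ∑' j, Complex.exp (lam j * t) • g j) := by
    filter_upwards [ae_restrict_mem measurableSet_Ioi] with t ht
    exact (hu t ht.le).hasSum.const_smul _
  have hbound : IntegrableOn (fun t : ℝ => √(∑' j, ‖g j‖ ^ 2) * Real.exp (-s.re * t)) (Ioi 0) :=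
    (exp_neg_integrableOn_Ioi 0 hs).const_mul _
  have hf (j : ι) := integrableOn_laplace_cexp_smul (hlt j) (g j)
  have hres := hasSum_integral_of_dominated_partial_sums hf hbound hle hlim
  simp only [integral_laplace_cexp_smul (hlt _)] at hres
  exact ⟨integrable_of_dominated_partial_sums (fun j => (hf j).aestronglyMeasurable)
    hbound hle hlim, hres.summable, hres.tsum_eq.symm⟩
end
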